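/- Let $p \ge 3$ and consider the restricted Lie algebra $\mathfrak{sl}(2)_s = \mathfrak{sl}(2) \oplus \mathbb{K}c_0$ with $c_0$ central, $[p]$-map $(x,\alpha c_0)^{[p]} = (x^{[p]}, \psi(x) c_0)$ where $\psi$ is $p$-semilinear with $\psi(e)=\psi(f)=0$, $\psi(h)=1$. Then the nullcone is $V(\mathfrak{sl}(2)_s) = (\mathbb{K}e \oplus \mathbb{K}c_0) \cup (\mathbb{K}f \oplus \mathbb{K}c_0)$ and $\mathbb{E}(2, \mathfrak{sl}(2)_s) = \{\mathbb{K}e \oplus \mathbb{K}c_0,\ \mathbb{K}f \oplus \mathbb{K}c_0\}$ consists of exactly two points; in particular $\mathbb{E}(2,\mathfrak{sl}(2)_s)$ is disconnected. -/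

import Mathlib

open scoped TensorProduct

attribute [local instance] LieRing.ofAssociativeRing

namespace Paper

/-- A restricted Lie algebra structure (`p`-map) on a Lie algebra `L` over `K`:
a `p`-operation satisfying `(a • x)^{[p]} = a^p • x^{[p]}`, `ad (x^{[p]}) = (ad x)^p`,
and Jacobson's formula, recorded here through the fact that
`(x+y)^{[p]} - x^{[p]} - y^{[p]}` is a sum of the Jacobson terms `s_i(x,y)`, which lie in the
`p`-th term of the lower central series of the subalgebra generated by `x` and `y`. -/
class PStructure (p : ℕ) (K : Type) (L : Type) [Field K] [LieRing L] [LieAlgebra K L] :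
    Type where
  pMap : L → L
  smul_pMap : ∀ (a : K) (x : L), pMap (a • x) = a ^ p • pMap x
  ad_pMap : ∀ x : L, LieAlgebra.ad K L (pMap x) = LieAlgebra.ad K L x ^ p
  jacobson_mem : ∀ x y : L,
    pMap (x + y) - pMap x - pMap y ∈
      Submodule.map (LieSubalgebra.lieSpan K L {x, y}).incl.toLinearMap
        (LieModule.lowerCentralSeries K ↥(LieSubalgebra.lieSpan K L {x, y})
          ↥(LieSubalgebra.lieSpan K L {x, y}) (p - 1)).toSubmodule

section Basic

variable (p : ℕ) (K L : Type) [Field K] [LieRing L] [LieAlgebra K L] [PStructure p K L]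

/-- The `p`-map of a restricted Lie algebra. -/
def pmap (x : L) : L := PStructure.pMap (p := p) (K := K) x

/-- The nullcone `V(L) = {x | x^{[p]} = 0}`. -/
def nullcone : Set L := {x | pmap p K L x = 0}

/-- A restricted Lie algebra is unipotent if some iterate of the `p`-map vanishes. -/
def IsUnipotent : Prop := ∃ n : ℕ, ∀ x : L, (pmap p K L)^[n] x = 0

/-- A `p`-subalgebra: a Lie subalgebra closed under the `p`-map. -/
def IsPSubalgebra (S : LieSubalgebra K L) : Prop := ∀ x ∈ S, pmap p K L x ∈ S

/-- `E(2,L)`: two-dimensional elementary abelian `p`-subalgebras, viewed as subspaces. -/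
def E2 : Set (Submodule K L) :=
  {e | Module.finrank K ↥e = 2 ∧ (∀ x ∈ e, ∀ y ∈ e, ⁅x, y⁆ = (0 : L)) ∧
    ∀ x ∈ e, pmap p K L x = 0}

/-- The elementary abelian `2`-planes lying inside a given subalgebra. -/
def E2in (S : LieSubalgebra K L) : Set (Submodule K L) :=
  {e ∈ E2 p K L | e ≤ S.toSubmodule}

/-- `Max_p(L)`: maximal proper `p`-subalgebras containing some elementary abelian `2`-plane. -/
def MaxP : Set (LieSubalgebra K L) :=
  {m | IsPSubalgebra p K L m ∧ m ≠ ⊤ ∧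
    (∀ m' : LieSubalgebra K L, IsPSubalgebra p K L m' → m' ≠ ⊤ → m ≤ m' → m = m') ∧
    (E2in p K L m).Nonempty}

/-- The cyclic `p`-subalgebra `(K z)_p` generated by one element. -/
def cyclicSpan (z : L) : Submodule K L :=
  Submodule.span K (Set.range fun j : ℕ => (pmap p K L)^[j] z)

end Basic

section Zariski

variable (K V : Type) [Field K] [AddCommGroup V] [Module K V]

/-- The algebra of polynomial functions on a vector space: the subalgebra of functions
generated by the linear forms. -/
def polyFunctions : Subalgebra K (V → K) :=
  Algebra.adjoin K (Set.range fun φ : Module.Dual K V => (φ : V → K))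

/-- Zariski-closed subsets: common zero sets of families of polynomial functions. -/
def IsZariskiClosed (s : Set V) : Prop :=
  ∃ S : Set (V → K), S ⊆ (polyFunctions K V : Set (V → K)) ∧ s = {v : V | ∀ f ∈ S, f v = 0}

/-- The Zariski topology on a vector space. -/
def zariskiTopology : TopologicalSpace V :=
  TopologicalSpace.generateFrom {s : Set V | IsZariskiClosed K V sᶜ}

/-- The topology on the set of subspaces of `V` (in particular on Grassmannians of `2`-planes),
coinduced by the span map from the (Zariski-topologized) space of linearly independent pairs. -/
def planeTopology : TopologicalSpace (Submodule K V) :=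
  TopologicalSpace.coinduced
    (fun q : {q : V × V // LinearIndependent K ![q.1, q.2]} =>
      Submodule.span K {q.val.1, q.val.2})
    (TopologicalSpace.induced Subtype.val (zariskiTopology K (V × V)))

end Zariski

end Paper
namespace Paper

section U0

variable (p : ℕ) (K L : Type) [Field K] [LieRing L] [LieAlgebra K L] [PStructure p K L]

/-- The defining relations of the restricted enveloping algebra: `x^p = x^{[p]}`. -/
inductive U0Rel : UniversalEnvelopingAlgebra K L → UniversalEnvelopingAlgebra K L → Prop
  | rel (x : L) : U0Rel (UniversalEnvelopingAlgebra.ι K x ^ p)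
      (UniversalEnvelopingAlgebra.ι K (pmap p K L x))

/-- The restricted enveloping algebra `U₀(L)`. -/
def U0 : Type := RingQuot (U0Rel p K L)

noncomputable instance : Ring (U0 p K L) := inferInstanceAs (Ring (RingQuot _))
noncomputable instance : Algebra K (U0 p K L) := inferInstanceAs (Algebra K (RingQuot _))

/-- The canonical map `L → U₀(L)`. -/
noncomputable def u0ι : L →ₗ[K] U0 p K L :=
  ((RingQuot.mkAlgHom K (U0Rel p K L)).toLinearMap).comp
    (UniversalEnvelopingAlgebra.ι (R := K) (L := L)).toLinearMap

variable {p K L}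

lemma u0ι_lie (x y : L) :
    u0ι p K L ⁅x, y⁆ = u0ι p K L x * u0ι p K L y - u0ι p K L y * u0ι p K L x := by
  have h : UniversalEnvelopingAlgebra.ι (R := K) ⁅x, y⁆
      = UniversalEnvelopingAlgebra.ι (R := K) x * UniversalEnvelopingAlgebra.ι (R := K) y
        - UniversalEnvelopingAlgebra.ι (R := K) y * UniversalEnvelopingAlgebra.ι (R := K) x := by
    rw [LieHom.map_lie, Ring.lie_def]
  have e : ∀ z : L, u0ι p K L z
      = RingQuot.mkAlgHom K (U0Rel p K L) (UniversalEnvelopingAlgebra.ι K z) := fun z => rfl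
  rw [e, e, e, h, map_sub, map_mul, map_mul]
  rfl

/-- `U₀(L)` is a Lie module over `L` via left multiplication. -/
noncomputable instance : LieRingModule L (U0 p K L) where
  bracket x u := u0ι p K L x * u
  add_lie x y u := by
    show u0ι p K L (x + y) * u = u0ι p K L x * u + u0ι p K L y * u
    rw [map_add, add_mul]
  lie_add x u v := by
    show u0ι p K L x * (u + v) = u0ι p K L x * u + u0ι p K L x * v
    rw [mul_add]
  leibniz_lie x y u := by
    show u0ι p K L x * (u0ι p K L y * u)
      = u0ι p K L ⁅x, y⁆ * u + u0ι p K L y * (u0ι p K L x * u)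
    rw [u0ι_lie, sub_mul, mul_assoc, mul_assoc, sub_add_cancel]

noncomputable instance : LieModule K L (U0 p K L) where
  smul_lie t x u := by
    show u0ι p K L (t • x) * u = t • (u0ι p K L x * u)
    rw [map_smul, smul_mul_assoc]
  lie_smul t x u := by
    show u0ι p K L x * t • u = t • (u0ι p K L x * u)
    rw [mul_smul_comm]

end U0

section Modules

variable (p : ℕ) (K L : Type) [Field K] [LieRing L] [LieAlgebra K L] [PStructure p K L]

/-- Pi types of Lie modules are Lie modules. -/
instance piLieRingModule {ι : Type} {M : ι → Type} [∀ i, AddCommGroup (M i)]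
    [∀ i, LieRingModule L (M i)] : LieRingModule L (∀ i, M i) where
  bracket x f := fun i => ⁅x, f i⁆
  add_lie x y f := by funext i; exact add_lie x y (f i)
  lie_add x f g := by funext i; exact lie_add x (f i) (g i)
  leibniz_lie x y f := by funext i; exact leibniz_lie x y (f i)

instance piLieModule {ι : Type} {M : ι → Type} [∀ i, AddCommGroup (M i)] [∀ i, Module K (M i)]
    [∀ i, LieRingModule L (M i)] [∀ i, LieModule K L (M i)] : LieModule K L (∀ i, M i) where
  smul_lie t x f := by funext i; exact smul_lie t x (f i)
  lie_smul t x f := by funext i; exact lie_smul t x (f i)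

/-- Products of Lie modules are Lie modules. -/
instance prodLieRingModule {M N : Type} [AddCommGroup M] [AddCommGroup N]
    [LieRingModule L M] [LieRingModule L N] : LieRingModule L (M × N) where
  bracket x q := (⁅x, q.1⁆, ⁅x, q.2⁆)
  add_lie x y q := by ext <;> simp [add_lie]
  lie_add x q r := by ext <;> simp [lie_add]
  leibniz_lie x y q := by ext <;> simp

instance prodLieModule {M N : Type} [AddCommGroup M] [AddCommGroup N] [Module K M] [Module K N]
    [LieRingModule L M] [LieRingModule L N] [LieModule K L M] [LieModule K L N] :
    LieModule K L (M × N) where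
  smul_lie t x q := by
    refine Prod.ext ?_ ?_
    · exact smul_lie t x q.1
    · exact smul_lie t x q.2
  lie_smul t x q := by
    refine Prod.ext ?_ ?_
    · exact lie_smul t x q.1
    · exact lie_smul t x q.2

/-- A Lie module is restricted if the `p`-map acts as the `p`-th power of the action. -/
def IsRestrictedModule (M : Type) [AddCommGroup M] [Module K M] [LieRingModule L M]
    [LieModule K L M] : Prop :=
  ∀ x : L, LieModule.toEnd K L M (pmap p K L x) = LieModule.toEnd K L M x ^ p

/-- A module is projective over `U₀(L)` iff it is a direct summand of a finite free module. -/
def IsProjectiveMod (P : Type) [AddCommGroup P] [Module K P] [LieRingModule L P]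
    [LieModule K L P] : Prop :=
  ∃ (n : ℕ) (i : P →ₗ⁅K,L⁆ (Fin n → U0 p K L)) (r : (Fin n → U0 p K L) →ₗ⁅K,L⁆ P),
    r.comp i = LieModuleHom.id

/-- `M` is (up to iso) the kernel of a surjection from a free `U₀(L)`-module onto `N`;
such kernels compute the Heller shift `Ω(N)` up to projective direct summands. -/
def IsSyzygyStep (N : Type) [AddCommGroup N] [Module K N] [LieRingModule L N] [LieModule K L N]
    (M : Type) [AddCommGroup M] [Module K M] [LieRingModule L M] [LieModule K L M] : Prop :=
  ∃ (n : ℕ) (f : (Fin n → U0 p K L) →ₗ⁅K,L⁆ N), Function.Surjective f ∧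
    Nonempty (M ≃ₗ⁅K,L⁆ ↥(LieModuleHom.ker f))

end Modules

end Paper
namespace Paper

section Heller

variable (p : ℕ) (K L : Type) [Field K] [LieRing L] [LieAlgebra K L] [PStructure p K L]

/-- `M` is (up to iso) an `n`-th syzygy of `N` over `U₀(L)`, computed by iterated
kernels of surjections from free modules. -/
def IsNthSyzygy : (n : ℕ) → (N : Type) → [AddCommGroup N] → [Module K N] →
    [LieRingModule L N] → [LieModule K L N] → (M : Type) → [AddCommGroup M] → [Module K M] →
    [LieRingModule L M] → [LieModule K L M] → Prop
  | 0, N, _, _, _, _, M, _, _, _, _ => Nonempty (M ≃ₗ⁅K,L⁆ N)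
  | n + 1, N, _, _, _, _, M, _, _, _, _ =>
    ∃ (X : Type) (_ : AddCommGroup X) (_ : Module K X) (_ : LieRingModule L X)
      (_ : LieModule K L X), IsSyzygyStep p K L N X ∧ IsNthSyzygy n X M

/-- Stable isomorphism: isomorphism after adding projective direct summands. -/
def StablyIso (M : Type) [AddCommGroup M] [Module K M] [LieRingModule L M] [LieModule K L M]
    (N : Type) [AddCommGroup N] [Module K N] [LieRingModule L N] [LieModule K L N] : Prop :=
  ∃ (P Q : Type) (_ : AddCommGroup P) (_ : Module K P) (_ : LieRingModule L P)
    (_ : LieModule K L P) (_ : AddCommGroup Q) (_ : Module K Q) (_ : LieRingModule L Q)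
    (_ : LieModule K L Q), IsProjectiveMod p K L P ∧ IsProjectiveMod p K L Q ∧
      Nonempty ((M × P) ≃ₗ⁅K,L⁆ (N × Q))

/-- `M ≅ (n-th syzygy of N) ⊕ (projective)`. -/
def StablyNthSyzygy (n : ℕ) (N : Type) [AddCommGroup N] [Module K N] [LieRingModule L N]
    [LieModule K L N] (M : Type) [AddCommGroup M] [Module K M] [LieRingModule L M]
    [LieModule K L M] : Prop :=
  ∃ (X : Type) (_ : AddCommGroup X) (_ : Module K X) (_ : LieRingModule L X)
    (_ : LieModule K L X), IsNthSyzygy p K L n N X ∧ StablyIso p K L M X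

/-- `M ≅ Ω^z(N) ⊕ (projective)` for `z : ℤ`; for negative `z` this is expressed by the
(equivalent) condition that `N` is stably the `(-z)`-th syzygy of `M`. -/
def IsStableHeller (z : ℤ) (N : Type) [AddCommGroup N] [Module K N] [LieRingModule L N]
    [LieModule K L N] (M : Type) [AddCommGroup M] [Module K M] [LieRingModule L M]
    [LieModule K L M] : Prop :=
  ∃ n : ℕ, (z = (n : ℤ) ∧ StablyNthSyzygy p K L n N M) ∨
    (z = -(n : ℤ) ∧ StablyNthSyzygy p K L n M N)

end Heller

section Char

variable (p : ℕ) (K L : Type) [Field K] [LieRing L] [LieAlgebra K L] [PStructure p K L]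

/-- A character of the restricted Lie algebra, i.e. an algebra homomorphism `U₀(L) → K`:
equivalently, a linear form vanishing on brackets and compatible with the `p`-map. -/
structure PCharacter : Type where
  toLinear : L →ₗ[K] K
  map_lie' : ∀ x y : L, toLinear ⁅x, y⁆ = 0
  map_pmap' : ∀ x : L, toLinear (pmap p K L x) = toLinear x ^ p

end Char

section CharMod

variable {p : ℕ} {K L : Type} [Field K] [LieRing L] [LieAlgebra K L] [PStructure p K L]

/-- The one-dimensional module `K_λ` attached to a character `λ`. -/
def CharMod (_lam : PCharacter p K L) : Type := K

namespace CharMod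

instance (lam : PCharacter p K L) : AddCommGroup (CharMod lam) :=
  inferInstanceAs (AddCommGroup K)

instance (lam : PCharacter p K L) : Module K (CharMod lam) := inferInstanceAs (Module K K)

instance (lam : PCharacter p K L) : LieRingModule L (CharMod lam) where
  bracket x a := lam.toLinear x • a
  add_lie x y a := by
    show lam.toLinear (x + y) • a = lam.toLinear x • a + lam.toLinear y • a
    rw [map_add, add_smul]
  lie_add x a b := by
    show lam.toLinear x • (a + b) = lam.toLinear x • a + lam.toLinear x • b
    rw [smul_add]
  leibniz_lie x y a := by
    show lam.toLinear x • lam.toLinear y • a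
      = lam.toLinear ⁅x, y⁆ • a + lam.toLinear y • lam.toLinear x • a
    rw [lam.map_lie', zero_smul, zero_add, smul_comm]

instance (lam : PCharacter p K L) : LieModule K L (CharMod lam) where
  smul_lie t x a := by
    show lam.toLinear (t • x) • a = t • lam.toLinear x • a
    rw [map_smul, smul_assoc]
  lie_smul t x a := by
    show lam.toLinear x • t • a = t • lam.toLinear x • a
    rw [smul_comm]

end CharMod

end CharMod

section Char2

variable (p : ℕ) (K L : Type) [Field K] [LieRing L] [LieAlgebra K L] [PStructure p K L]

/-- The trivial (zero) character. -/
def trivChar (hp : p ≠ 0) : PCharacter p K L where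
  toLinear := 0
  map_lie' := by intro x y; simp
  map_pmap' := by intro x; simp [zero_pow hp]

/-- An endotrivial module: `M ⊗ M* ≅ K ⊕ (projective)` over `U₀(L)`. -/
def IsEndotrivial (hp : p ≠ 0) (M : Type) [AddCommGroup M] [Module K M] [LieRingModule L M]
    [LieModule K L M] : Prop :=
  ∃ (P : Type) (_ : AddCommGroup P) (_ : Module K P) (_ : LieRingModule L P)
    (_ : LieModule K L P), IsProjectiveMod p K L P ∧
      Nonempty ((M ⊗[K] Module.Dual K M) ≃ₗ⁅K,L⁆ ((CharMod (trivChar p K L hp)) × P))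

end Char2

end Paper
namespace Paper

section Counit

variable (p : ℕ) (K L : Type) [Field K] [LieRing L] [LieAlgebra K L] [PStructure p K L]

/-- The zero Lie algebra homomorphism `L → K`. -/
def zeroLieHom : L →ₗ⁅K⁆ K :=
  { (0 : L →ₗ[K] K) with map_lie' := by intro x y; simp }

/-- The counit (augmentation) `ε : U₀(L) → K`. -/
noncomputable def counit (hp : p ≠ 0) : U0 p K L →ₐ[K] K :=
  RingQuot.liftAlgHom K ⟨UniversalEnvelopingAlgebra.lift K (zeroLieHom K L), by
    rintro x y ⟨z⟩
    rw [map_pow, UniversalEnvelopingAlgebra.lift_ι_apply, UniversalEnvelopingAlgebra.lift_ι_apply]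
    show (0 : K) ^ p = (0 : K)
    exact zero_pow hp⟩

/-- A minimal step: kernel of a minimal surjection from a free module, i.e. a surjection
whose kernel is contained in `rad · F` (with the radical of `U₀` of a unipotent algebra
given by the augmentation ideal `ker ε`).  This computes the honest Heller shift `Ω(N)`. -/
def IsMinSyzygyStep (hp : p ≠ 0) (N : Type) [AddCommGroup N] [Module K N] [LieRingModule L N]
    [LieModule K L N] (M : Type) [AddCommGroup M] [Module K M] [LieRingModule L M]
    [LieModule K L M] : Prop :=
  ∃ (n : ℕ) (f : (Fin n → U0 p K L) →ₗ⁅K,L⁆ N), Function.Surjective f ∧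
    (LieModuleHom.ker f).toSubmodule ≤ Submodule.restrictScalars K
      ((RingHom.ker (counit p K L hp)) • (⊤ : Submodule (U0 p K L) (Fin n → U0 p K L))) ∧
    Nonempty (M ≃ₗ⁅K,L⁆ ↥(LieModuleHom.ker f))

/-- `M` is the `n`-th minimal syzygy (Heller shift `Ωⁿ N`) of `N`. -/
def IsMinNthSyzygy (hp : p ≠ 0) : (n : ℕ) → (N : Type) → [AddCommGroup N] → [Module K N] →
    [LieRingModule L N] → [LieModule K L N] → (M : Type) → [AddCommGroup M] → [Module K M] →
    [LieRingModule L M] → [LieModule K L M] → Prop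
  | 0, N, _, _, _, _, M, _, _, _, _ => Nonempty (M ≃ₗ⁅K,L⁆ N)
  | n + 1, N, _, _, _, _, M, _, _, _, _ =>
    ∃ (X : Type) (_ : AddCommGroup X) (_ : Module K X) (_ : LieRingModule L X)
      (_ : LieModule K L X), IsMinSyzygyStep p K L hp N X ∧ IsMinNthSyzygy hp n X M

end Counit

section E2Subalg

variable (p : ℕ) (K L : Type) [Field K] [LieRing L] [LieAlgebra K L] [PStructure p K L]

/-- An elementary abelian plane `e ∈ E(2,L)` as a Lie subalgebra. -/
def E2.subalg (e : Submodule K L) (he : e ∈ E2 p K L) : LieSubalgebra K L :=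
  { e with
    lie_mem' := fun {x y} hx hy => Set.mem_of_eq_of_mem (he.2.1 x hx y hy) e.zero_mem }

/-- The restricted structure on an elementary abelian plane: the `p`-map vanishes. -/
def E2.pstruct (e : Submodule K L) (he : e ∈ E2 p K L) (hp : p ≠ 0) :
    PStructure p K ↥(E2.subalg p K L e he) where
  pMap _ := 0
  smul_pMap a x := by simp
  ad_pMap x := by
    have hx : LieAlgebra.ad K ↥(E2.subalg p K L e he) x = 0 := by
      ext y
      show ((⁅x, y⁆ : ↥(E2.subalg p K L e he)) : L) = ((0 : ↥(E2.subalg p K L e he)) : L)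
      rw [LieSubalgebra.coe_bracket, ZeroMemClass.coe_zero]
      exact he.2.1 _ x.2 _ y.2
    rw [hx, zero_pow hp]
    exact (LieAlgebra.ad K ↥(E2.subalg p K L e he)).map_zero
  jacobson_mem x y := by simp

/-- The syzygy function of an endotrivial module: `s_M(e) = s` iff the restriction of `M`
to `e` is `Ω^s(K) ⊕ (projective)` over `U₀(e)`. -/
def SyzygyFunctionEq (hp : p ≠ 0) (e : Submodule K L) (he : e ∈ E2 p K L) (M : Type)
    [AddCommGroup M] [Module K M] [LieRingModule L M] [LieModule K L M] (s : ℤ) : Prop :=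
  letI := E2.pstruct p K L e he hp
  IsStableHeller p K ↥(E2.subalg p K L e he) s
    (CharMod (trivChar p K ↥(E2.subalg p K L e he) hp)) M

/-- The degree function `deg_M(e) = dim M / 𝔎(M|_e)`, where the generic kernel
`𝔎(M|_e) = Σ_{x ∈ ℙ(e)} ker x_M`. -/
noncomputable def degE (e : Submodule K L) (M : Type) [AddCommGroup M] [Module K M]
    [LieRingModule L M] [LieModule K L M] : ℕ :=
  Module.finrank K M -
    Module.finrank K ↥(⨆ (x : L) (_ : x ∈ e ∧ x ≠ 0),
      LinearMap.ker (LieModule.toEnd K L M x))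

end E2Subalg

end Paper

namespace Paper

section Aux19

variable {K L : Type} [Field K] [LieRing L] [LieAlgebra K L]

lemma zero_iff4 (b : Module.Basis (Fin 4) K L) (c0 c1 c2 c3 : K) :
    c0 • b 0 + c1 • b 1 + c2 • b 2 + c3 • b 3 = 0 ↔ c0 = 0 ∧ c1 = 0 ∧ c2 = 0 ∧ c3 = 0 := by
  constructor
  · intro h
    have li := Fintype.linearIndependent_iff.mp b.linearIndependent ![c0, c1, c2, c3]
    rw [Fin.sum_univ_four] at li
    simp only [Matrix.cons_val_zero, Matrix.cons_val_one, Matrix.head_cons,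
      Matrix.cons_val_two, Matrix.tail_cons, Matrix.cons_val_three] at li
    have := li h
    exact ⟨this 0, this 1, this 2, this 3⟩
  · rintro ⟨rfl, rfl, rfl, rfl⟩; simp

lemma sum_repr4 (b : Module.Basis (Fin 4) K L) (x : L) :
    b.repr x 0 • b 0 + b.repr x 1 • b 1 + b.repr x 2 • b 2 + b.repr x 3 • b 3 = x := by
  have := b.sum_repr x
  rwa [Fin.sum_univ_four] at this

lemma mem_span_03 (b : Module.Basis (Fin 4) K L) (x : L) :
    x ∈ Submodule.span K {b 0, b 3} ↔ b.repr x 1 = 0 ∧ b.repr x 2 = 0 := by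
  rw [Submodule.mem_span_pair]
  constructor
  · rintro ⟨m, n, rfl⟩
    simp [Finsupp.single_apply]
  · rintro ⟨h1, h2⟩
    refine ⟨b.repr x 0, b.repr x 3, ?_⟩
    have := sum_repr4 b x
    rw [h1, h2] at this
    simpa using this

lemma mem_span_23 (b : Module.Basis (Fin 4) K L) (x : L) :
    x ∈ Submodule.span K {b 2, b 3} ↔ b.repr x 0 = 0 ∧ b.repr x 1 = 0 := by
  rw [Submodule.mem_span_pair]
  constructor
  · rintro ⟨m, n, rfl⟩
    simp [Finsupp.single_apply]
  · rintro ⟨h1, h2⟩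
    refine ⟨b.repr x 2, b.repr x 3, ?_⟩
    have := sum_repr4 b x
    rw [h1, h2] at this
    simpa using this

lemma li_pair4 (b : Module.Basis (Fin 4) K L) (i j : Fin 4) (hij : i ≠ j) :
    LinearIndependent K ![b i, b j] := by
  refine LinearIndependent.pair_iff.mpr fun s t hst => ?_
  have li := Fintype.linearIndependent_iff.mp b.linearIndependent
    (fun k => if k = i then s else if k = j then t else 0)
  have hsum : (∑ k, (if k = i then s else if k = j then t else 0) • b k) = s • b i + t • b j := by
    rw [Finset.sum_eq_add_of_mem i j (Finset.mem_univ _) (Finset.mem_univ _) hij ?_]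
    · simp [hij.symm, if_neg hij]
    · intro k _ hk
      simp [hk.1, hk.2]
  rw [hsum] at li
  have := li hst
  have h1 := this i
  have h2 := this j
  simp [hij.symm] at h1 h2
  exact ⟨h1, h2⟩

lemma finrank_span_pair4 (b : Module.Basis (Fin 4) K L) (i j : Fin 4) (hij : i ≠ j) :
    Module.finrank K ↥(Submodule.span K {b i, b j}) = 2 := by
  have h : ({b i, b j} : Set L) = Set.range ![b i, b j] := by
    simp only [Matrix.range_cons, Matrix.range_empty, Set.union_empty, Set.union_singleton]
    exact Set.pair_comm _ _
  rw [h, finrank_span_eq_card (li_pair4 b i j hij)]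
  simp

lemma sub_union4 (W P Q : Submodule K L) (h : (W : Set L) ⊆ (P : Set L) ∪ (Q : Set L)) :
    W ≤ P ∨ W ≤ Q := by
  by_contra hc
  push_neg at hc
  obtain ⟨x, hxW, hxP⟩ := SetLike.not_le_iff_exists.mp hc.1
  obtain ⟨y, hyW, hyQ⟩ := SetLike.not_le_iff_exists.mp hc.2
  have hxQ : x ∈ Q := (h hxW).resolve_left hxP
  have hyP : y ∈ P := (h hyW).resolve_right hyQ
  rcases h (W.add_mem hxW hyW) with hh | hh
  · exact hxP (by simpa using P.sub_mem hh hyP)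
  · exact hyQ (by simpa using Q.sub_mem hh hxQ)

/-- Zariski-openness of coordinate-nonvanishing sets in the plane topology. -/
lemma isOpen_coordNe (K V : Type) [Field K] [AddCommGroup V] [Module K V]
    (φ : Module.Dual K V) :
    @IsOpen _ (planeTopology K V) {W : Submodule K V | ∃ x ∈ W, φ x ≠ 0} := by
  refine (isOpen_coinduced
    (t := TopologicalSpace.induced Subtype.val (zariskiTopology K (V × V)))
    (f := fun q : {q : V × V // LinearIndependent K ![q.1, q.2]} =>
      Submodule.span K {q.val.1, q.val.2})).mpr ?_
  have hpre : ((fun q : {q : V × V // LinearIndependent K ![q.1, q.2]} =>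
        Submodule.span K {q.val.1, q.val.2}) ⁻¹'
      {W : Submodule K V | ∃ x ∈ W, φ x ≠ 0})
      = Subtype.val ⁻¹' {v : V × V | ¬(φ v.1 = 0 ∧ φ v.2 = 0)} := by
    ext q
    simp only [Set.mem_preimage, Set.mem_setOf_eq]
    constructor
    · rintro ⟨x, hx, hφ⟩ ⟨h1, h2⟩
      obtain ⟨m, n, rfl⟩ := Submodule.mem_span_pair.mp hx
      simp [h1, h2] at hφ
    · intro h
      by_cases h1 : φ q.val.1 = 0
      · have h2 : φ q.val.2 ≠ 0 := fun h2 => h ⟨h1, h2⟩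
        exact ⟨q.val.2, Submodule.subset_span (Set.mem_insert_of_mem _ rfl), h2⟩
      · exact ⟨q.val.1, Submodule.subset_span (Set.mem_insert _ _), h1⟩
  rw [hpre]
  refine ⟨{v : V × V | ¬(φ v.1 = 0 ∧ φ v.2 = 0)}, ?_, rfl⟩
  refine TopologicalSpace.GenerateOpen.basic _ ?_
  refine ⟨{fun v => φ v.1, fun v => φ v.2}, ?_, ?_⟩
  · rintro f (rfl | rfl)
    · exact Algebra.subset_adjoin ⟨φ.comp (LinearMap.fst K V V), rfl⟩
    · exact Algebra.subset_adjoin ⟨φ.comp (LinearMap.snd K V V), rfl⟩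
  · ext v
    simp only [Set.mem_compl_iff, Set.mem_setOf_eq, not_not]
    constructor
    · rintro ⟨h1, h2⟩ f hf
      rcases hf with rfl | rfl
      · exact h1
      · exact h2
    · intro hf
      exact ⟨hf _ (Set.mem_insert _ _), hf _ (Set.mem_insert_of_mem _ rfl)⟩

end Aux19


/-- For the restricted Lie algebra `sl(2)_s = sl(2) ⊕ Kc₀` (basis
`e, h, f, c₀` with `[h,e] = 2e`, `[h,f] = -2f`, `[e,f] = h`, `c₀` central, and `p`-map
`(x, αc₀)^{[p]} = (x^{[p]}, ψ(x)c₀)` — explicitly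
`(αe + βh + γf + δc₀)^{[p]} = (β² + αγ)^{(p-1)/2}(αe + βh + γf) + βᵖc₀`), the nullcone is
`V = (Ke ⊕ Kc₀) ∪ (Kf ⊕ Kc₀)`, `E(2, sl(2)_s)` consists of exactly the two points
`Ke ⊕ Kc₀` and `Kf ⊕ Kc₀`, and `E(2, sl(2)_s)` is disconnected. -/
theorem statement19 (p : ℕ) (K L : Type) [Field K] [IsAlgClosed K] [CharP K p]
    [Fact (Nat.Prime p)] (hp3 : 3 ≤ p) [LieRing L] [LieAlgebra K L] [Module.Finite K L]
    [PStructure p K L] (b : Module.Basis (Fin 4) K L)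
    (hhe : ⁅b 1, b 0⁆ = (2 : K) • b 0)
    (hhf : ⁅b 1, b 2⁆ = -((2 : K) • b 2))
    (hef : ⁅b 0, b 2⁆ = b 1)
    (hc : ∀ x : L, ⁅b 3, x⁆ = 0)
    (hpm : ∀ α β γ δ : K,
      pmap p K L (α • b 0 + β • b 1 + γ • b 2 + δ • b 3)
        = ((β ^ 2 + α * γ) ^ ((p - 1) / 2)) • (α • b 0 + β • b 1 + γ • b 2)
          + (β ^ p) • b 3) :
    nullcone p K L
        = ((Submodule.span K {b 0, b 3} : Submodule K L) : Set L)
          ∪ ((Submodule.span K {b 2, b 3} : Submodule K L) : Set L) ∧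
    E2 p K L = {Submodule.span K {b 0, b 3}, Submodule.span K {b 2, b 3}} ∧
    (Submodule.span K {b 0, b 3} : Submodule K L) ≠ Submodule.span K {b 2, b 3} ∧
    ¬ @IsPreconnected _ (planeTopology K L) (E2 p K L) := by
  have hp0 : p ≠ 0 := (Fact.out : Nat.Prime p).ne_zero
  have hm0 : (p - 1) / 2 ≠ 0 := by omega
  -- the key coordinate characterization of the nullcone
  have key : ∀ x : L, pmap p K L x = 0 ↔
      (b.repr x 1 = 0 ∧ b.repr x 0 * b.repr x 2 = 0) := by
    intro x
    set α := b.repr x 0 with hα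
    set β := b.repr x 1 with hβ
    set γ := b.repr x 2 with hγ
    set δ := b.repr x 3 with hδ
    set c : K := (β ^ 2 + α * γ) ^ ((p - 1) / 2) with hc'
    have hrw : pmap p K L x
        = (c * α) • b 0 + (c * β) • b 1 + (c * γ) • b 2 + (β ^ p) • b 3 := by
      have hx := sum_repr4 b x
      calc pmap p K L x = pmap p K L (α • b 0 + β • b 1 + γ • b 2 + δ • b 3) := by rw [hx]
        _ = c • (α • b 0 + β • b 1 + γ • b 2) + (β ^ p) • b 3 := hpm α β γ δ
        _ = (c * α) • b 0 + (c * β) • b 1 + (c * γ) • b 2 + (β ^ p) • b 3 := by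
            rw [smul_add, smul_add, smul_smul, smul_smul, smul_smul]
    rw [hrw, zero_iff4]
    constructor
    · rintro ⟨h0, h1, h2, h3⟩
      have hβ0 : β = 0 := by
        have := pow_eq_zero_iff hp0 |>.mp h3
        exact this
      refine ⟨hβ0, ?_⟩
      by_contra hαγ
      have hcne : c ≠ 0 := by
        rw [hc', hβ0]
        exact pow_ne_zero _ (by simpa using hαγ)
      have hα0 : α = 0 := by
        rcases mul_eq_zero.mp h0 with h | h
        · exact absurd h hcne
        · exact h
      exact hαγ (by rw [hα0, zero_mul])
    · rintro ⟨hβ0, hαγ⟩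
      have hc0 : c = 0 := by
        rw [hc', hβ0]
        simp [hαγ, zero_pow hm0]
      refine ⟨by rw [hc0, zero_mul], by rw [hc0, zero_mul], by rw [hc0, zero_mul], ?_⟩
      rw [hβ0, zero_pow hp0]
  -- nullcone equality
  have hnull : nullcone p K L
      = ((Submodule.span K {b 0, b 3} : Submodule K L) : Set L)
        ∪ ((Submodule.span K {b 2, b 3} : Submodule K L) : Set L) := by
    ext x
    simp only [nullcone, Set.mem_setOf_eq, Set.mem_union, SetLike.mem_coe,
      mem_span_03, mem_span_23, key]
    constructor
    · rintro ⟨h1, h2⟩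
      rcases mul_eq_zero.mp h2 with h | h
      · exact Or.inr ⟨h, h1⟩
      · exact Or.inl ⟨h1, h⟩
    · rintro (⟨h1, h2⟩ | ⟨h1, h2⟩)
      · exact ⟨h1, by rw [h2, mul_zero]⟩
      · exact ⟨h2, by rw [h1, zero_mul]⟩
  -- brackets among basis vectors
  have h03 : ⁅b 0, b 3⁆ = (0 : L) := by rw [← lie_skew, hc]; simp
  have h23 : ⁅b 2, b 3⁆ = (0 : L) := by rw [← lie_skew, hc]; simp
  -- the two planes are in E2
  have hE1 : Submodule.span K {b 0, b 3} ∈ E2 p K L := by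
    refine ⟨finrank_span_pair4 b 0 3 (by decide), ?_, ?_⟩
    · intro x hx y hy
      obtain ⟨m, n, rfl⟩ := Submodule.mem_span_pair.mp hx
      obtain ⟨m', n', rfl⟩ := Submodule.mem_span_pair.mp hy
      simp [lie_smul, smul_lie, lie_add, add_lie, h03, hc]
    · intro x hx
      obtain ⟨h1, h2⟩ := (mem_span_03 b x).mp hx
      exact (key x).mpr ⟨h1, by rw [h2, mul_zero]⟩
  have hE2 : Submodule.span K {b 2, b 3} ∈ E2 p K L := by
    refine ⟨finrank_span_pair4 b 2 3 (by decide), ?_, ?_⟩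
    · intro x hx y hy
      obtain ⟨m, n, rfl⟩ := Submodule.mem_span_pair.mp hx
      obtain ⟨m', n', rfl⟩ := Submodule.mem_span_pair.mp hy
      simp [lie_smul, smul_lie, lie_add, add_lie, h23, hc]
    · intro x hx
      obtain ⟨h1, h2⟩ := (mem_span_23 b x).mp hx
      exact (key x).mpr ⟨h2, by rw [h1, zero_mul]⟩
  -- E2 is exactly these two points
  have hE2eq : E2 p K L = {Submodule.span K {b 0, b 3}, Submodule.span K {b 2, b 3}} := by
    ext W
    constructor
    · rintro ⟨hdim, habel, hnil⟩
      have hsub : (W : Set L) ⊆ ((Submodule.span K {b 0, b 3} : Submodule K L) : Set L)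
          ∪ ((Submodule.span K {b 2, b 3} : Submodule K L) : Set L) := by
        rw [← hnull]
        intro x hx
        exact hnil x hx
      rcases sub_union4 W _ _ hsub with hle | hle
      · exact Or.inl (Submodule.eq_of_le_of_finrank_eq hle
          (by rw [hdim, finrank_span_pair4 b 0 3 (by decide)]))
      · exact Or.inr (Submodule.eq_of_le_of_finrank_eq hle
          (by rw [hdim, finrank_span_pair4 b 2 3 (by decide)]))
    · rintro (rfl | rfl)
      · exact hE1
      · exact hE2
  -- the two planes are distinct
  have hne : (Submodule.span K {b 0, b 3} : Submodule K L) ≠ Submodule.span K {b 2, b 3} := by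
    intro h
    have hb0 : b 0 ∈ Submodule.span K ({b 0, b 3} : Set L) :=
      Submodule.subset_span (Set.mem_insert _ _)
    rw [h] at hb0
    have := ((mem_span_23 b (b 0)).mp hb0).1
    simp at this
  refine ⟨hnull, hE2eq, hne, ?_⟩
  -- disconnectedness
  intro hconn
  have hU1 := isOpen_coordNe K L (b.coord 0)
  have hU2 := isOpen_coordNe K L (b.coord 2)
  have hcover : E2 p K L ⊆ {W : Submodule K L | ∃ x ∈ W, b.coord 0 x ≠ 0}
      ∪ {W : Submodule K L | ∃ x ∈ W, b.coord 2 x ≠ 0} := by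
    rw [hE2eq]
    rintro W (rfl | rfl)
    · exact Or.inl ⟨b 0, Submodule.subset_span (Set.mem_insert _ _), by simp⟩
    · exact Or.inr ⟨b 2, Submodule.subset_span (Set.mem_insert _ _), by simp⟩
  have hne1 : (E2 p K L ∩ {W : Submodule K L | ∃ x ∈ W, b.coord 0 x ≠ 0}).Nonempty := by
    refine ⟨Submodule.span K {b 0, b 3}, hE1, b 0,
      Submodule.subset_span (Set.mem_insert _ _), by simp⟩
  have hne2 : (E2 p K L ∩ {W : Submodule K L | ∃ x ∈ W, b.coord 2 x ≠ 0}).Nonempty := by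
    refine ⟨Submodule.span K {b 2, b 3}, hE2, b 2,
      Submodule.subset_span (Set.mem_insert _ _), by simp⟩
  obtain ⟨W, hWE, hW1, hW2⟩ := hconn _ _ hU1 hU2 hcover hne1 hne2
  rw [hE2eq] at hWE
  rcases hWE with rfl | rfl
  · obtain ⟨x, hx, hφ⟩ := hW2
    exact hφ (by simpa [Module.Basis.coord_apply] using ((mem_span_03 b x).mp hx).2)
  · obtain ⟨x, hx, hφ⟩ := hW1
    exact hφ (by simpa [Module.Basis.coord_apply] using ((mem_span_23 b x).mp hx).1)


end Paper
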